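/- Type preservation of the rule (r-letRec) in Fpl: for every value v, expression e, and type T, if ∅ ⊢ (letrec x = v in e) : T then ∅ ⊢ e[(fix (λx.v))/x] : T. -/

import Mathlib

/-!
Formalization of the Fpl language (Cimini, Miller, Siek: "Well-Typed Languages
are Sound"): syntax, typing, values, errors, evaluation/error contexts and
small-step reduction.  Term and type variables use de Bruijn indices, so all
substitutions are capture-avoiding by construction.
-/

namespace Fpl

/-- Types of Fpl: `Bool | Int | T→T | List T | T+T | X | ∀X.T | μX.T`
(de Bruijn type variables). -/
inductive Ty : Type
  | bool : Ty
  | int : Ty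
  | arrow : Ty → Ty → Ty
  | list : Ty → Ty
  | sum : Ty → Ty → Ty
  | var : ℕ → Ty
  | all : Ty → Ty
  | mu : Ty → Ty
  deriving DecidableEq

/-- Shift the type variables `≥ c` up by one. -/
def Ty.shift (c : ℕ) : Ty → Ty
  | .bool => .bool
  | .int => .int
  | .arrow T1 T2 => .arrow (T1.shift c) (T2.shift c)
  | .list T => .list (T.shift c)
  | .sum T1 T2 => .sum (T1.shift c) (T2.shift c)
  | .var X => if X < c then .var X else .var (X + 1)
  | .all T => .all (T.shift (c + 1))
  | .mu T => .mu (T.shift (c + 1))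

/-- Capture-avoiding substitution of the type `S` for type variable `j`. -/
def Ty.subst : ℕ → Ty → Ty → Ty
  | _, _, .bool => .bool
  | _, _, .int => .int
  | j, S, .arrow T1 T2 => .arrow (Ty.subst j S T1) (Ty.subst j S T2)
  | j, S, .list T => .list (Ty.subst j S T)
  | j, S, .sum T1 T2 => .sum (Ty.subst j S T1) (Ty.subst j S T2)
  | j, S, .var X => if X = j then S else if j < X then .var (X - 1) else .var X
  | j, S, .all T => .all (Ty.subst (j + 1) (S.shift 0) T)
  | j, S, .mu T => .mu (Ty.subst (j + 1) (S.shift 0) T)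
termination_by j S T => sizeOf T

/-- `T.open0 S` is `T[S/X]` where `X` is the outermost (de Bruijn 0) type
variable of `T`; e.g. the body of a `μX.T` or `∀X.T` binder. -/
def Ty.open0 (T S : Ty) : Ty := Ty.subst 0 S T

/-- Expressions of Fpl (de Bruijn term variables):
`true | false | if e e e | z | succ e | pred e | isZero e | x | λx.e | e e |
 nil | cons e e | head e | tail e | isNil e | inl e | inr e |
 case e of inl x => e | inr x => e | ΛX.e | e[T] | fold e | unfold e |
 fix e | letrec x = e in e | raise e | try e with e`.
In `caseE e1 e2 e3` both branches bind one term variable; in `letrec e1 e2`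
both `e1` and `e2` bind the recursive term variable. -/
inductive Exp : Type
  | tt : Exp
  | ff : Exp
  | ite : Exp → Exp → Exp → Exp
  | z : Exp
  | succ : Exp → Exp
  | pred : Exp → Exp
  | isZero : Exp → Exp
  | var : ℕ → Exp
  | lam : Exp → Exp
  | app : Exp → Exp → Exp
  | nil : Exp
  | cons : Exp → Exp → Exp
  | head : Exp → Exp
  | tail : Exp → Exp
  | isNil : Exp → Exp
  | inl : Exp → Exp
  | inr : Exp → Exp
  | caseE : Exp → Exp → Exp → Exp
  | tlam : Exp → Exp
  | tapp : Exp → Ty → Exp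
  | fold : Exp → Exp
  | unfold : Exp → Exp
  | fix : Exp → Exp
  | letrec : Exp → Exp → Exp
  | raise : Exp → Exp
  | tryw : Exp → Exp → Exp

/-- Shift the type variables `≥ c` occurring in an expression up by one. -/
def Exp.shiftTy (c : ℕ) : Exp → Exp
  | .tt => .tt
  | .ff => .ff
  | .ite e1 e2 e3 => .ite (e1.shiftTy c) (e2.shiftTy c) (e3.shiftTy c)
  | .z => .z
  | .succ e => .succ (e.shiftTy c)
  | .pred e => .pred (e.shiftTy c)
  | .isZero e => .isZero (e.shiftTy c)
  | .var x => .var x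
  | .lam e => .lam (e.shiftTy c)
  | .app e1 e2 => .app (e1.shiftTy c) (e2.shiftTy c)
  | .nil => .nil
  | .cons e1 e2 => .cons (e1.shiftTy c) (e2.shiftTy c)
  | .head e => .head (e.shiftTy c)
  | .tail e => .tail (e.shiftTy c)
  | .isNil e => .isNil (e.shiftTy c)
  | .inl e => .inl (e.shiftTy c)
  | .inr e => .inr (e.shiftTy c)
  | .caseE e1 e2 e3 => .caseE (e1.shiftTy c) (e2.shiftTy c) (e3.shiftTy c)
  | .tlam e => .tlam (e.shiftTy (c + 1))
  | .tapp e T => .tapp (e.shiftTy c) (T.shift c)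
  | .fold e => .fold (e.shiftTy c)
  | .unfold e => .unfold (e.shiftTy c)
  | .fix e => .fix (e.shiftTy c)
  | .letrec e1 e2 => .letrec (e1.shiftTy c) (e2.shiftTy c)
  | .raise e => .raise (e.shiftTy c)
  | .tryw e1 e2 => .tryw (e1.shiftTy c) (e2.shiftTy c)

/-- Shift the term variables `≥ c` up by one. -/
def Exp.shiftTm (c : ℕ) : Exp → Exp
  | .tt => .tt
  | .ff => .ff
  | .ite e1 e2 e3 => .ite (e1.shiftTm c) (e2.shiftTm c) (e3.shiftTm c)
  | .z => .z
  | .succ e => .succ (e.shiftTm c)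
  | .pred e => .pred (e.shiftTm c)
  | .isZero e => .isZero (e.shiftTm c)
  | .var x => if x < c then .var x else .var (x + 1)
  | .lam e => .lam (e.shiftTm (c + 1))
  | .app e1 e2 => .app (e1.shiftTm c) (e2.shiftTm c)
  | .nil => .nil
  | .cons e1 e2 => .cons (e1.shiftTm c) (e2.shiftTm c)
  | .head e => .head (e.shiftTm c)
  | .tail e => .tail (e.shiftTm c)
  | .isNil e => .isNil (e.shiftTm c)
  | .inl e => .inl (e.shiftTm c)
  | .inr e => .inr (e.shiftTm c)
  | .caseE e1 e2 e3 => .caseE (e1.shiftTm c) (e2.shiftTm (c + 1)) (e3.shiftTm (c + 1))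
  | .tlam e => .tlam (e.shiftTm c)
  | .tapp e T => .tapp (e.shiftTm c) T
  | .fold e => .fold (e.shiftTm c)
  | .unfold e => .unfold (e.shiftTm c)
  | .fix e => .fix (e.shiftTm c)
  | .letrec e1 e2 => .letrec (e1.shiftTm (c + 1)) (e2.shiftTm (c + 1))
  | .raise e => .raise (e.shiftTm c)
  | .tryw e1 e2 => .tryw (e1.shiftTm c) (e2.shiftTm c)

/-- Capture-avoiding substitution of the expression `s` for term variable `j`. -/
def Exp.substTm : ℕ → Exp → Exp → Exp
  | j, s, .tt => .tt
  | j, s, .ff => .ff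
  | j, s, .ite e1 e2 e3 => .ite (Exp.substTm j s e1) (Exp.substTm j s e2) (Exp.substTm j s e3)
  | j, s, .z => .z
  | j, s, .succ e => .succ (Exp.substTm j s e)
  | j, s, .pred e => .pred (Exp.substTm j s e)
  | j, s, .isZero e => .isZero (Exp.substTm j s e)
  | j, s, .var x => if x = j then s else if j < x then .var (x - 1) else .var x
  | j, s, .lam e => .lam (Exp.substTm (j + 1) (s.shiftTm 0) e)
  | j, s, .app e1 e2 => .app (Exp.substTm j s e1) (Exp.substTm j s e2)
  | j, s, .nil => .nil
  | j, s, .cons e1 e2 => .cons (Exp.substTm j s e1) (Exp.substTm j s e2)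
  | j, s, .head e => .head (Exp.substTm j s e)
  | j, s, .tail e => .tail (Exp.substTm j s e)
  | j, s, .isNil e => .isNil (Exp.substTm j s e)
  | j, s, .inl e => .inl (Exp.substTm j s e)
  | j, s, .inr e => .inr (Exp.substTm j s e)
  | j, s, .caseE e1 e2 e3 =>
      .caseE (Exp.substTm j s e1) (Exp.substTm (j + 1) (s.shiftTm 0) e2)
        (Exp.substTm (j + 1) (s.shiftTm 0) e3)
  | j, s, .tlam e => .tlam (Exp.substTm j (s.shiftTy 0) e)
  | j, s, .tapp e T => .tapp (Exp.substTm j s e) T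
  | j, s, .fold e => .fold (Exp.substTm j s e)
  | j, s, .unfold e => .unfold (Exp.substTm j s e)
  | j, s, .fix e => .fix (Exp.substTm j s e)
  | j, s, .letrec e1 e2 =>
      .letrec (Exp.substTm (j + 1) (s.shiftTm 0) e1) (Exp.substTm (j + 1) (s.shiftTm 0) e2)
  | j, s, .raise e => .raise (Exp.substTm j s e)
  | j, s, .tryw e1 e2 => .tryw (Exp.substTm j s e1) (Exp.substTm j s e2)
termination_by j s e => sizeOf e

/-- `e.open0 s` is `e[s/x]` where `x` is the innermost (de Bruijn 0) bound
term variable of `e`. -/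
def Exp.open0 (e s : Exp) : Exp := Exp.substTm 0 s e

/-- Values: `true | false | z | succ v | λx.e | nil | cons v v | inl v |
inr v | ΛX.e | fold v`. -/
inductive Value : Exp → Prop
  | tt : Value .tt
  | ff : Value .ff
  | z : Value .z
  | succ {v : Exp} : Value v → Value (.succ v)
  | lam (e : Exp) : Value (.lam e)
  | nil : Value .nil
  | cons {v1 v2 : Exp} : Value v1 → Value v2 → Value (.cons v1 v2)
  | inl {v : Exp} : Value v → Value (.inl v)
  | inr {v : Exp} : Value v → Value (.inr v)
  | tlam (e : Exp) : Value (.tlam e)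
  | fold {v : Exp} : Value v → Value (.fold v)

/-- Errors: `er ::= raise v`. -/
inductive IsError : Exp → Prop
  | raise {v : Exp} : Value v → IsError (.raise v)

/-- A typing environment is a list of types for the term variables (the head
is the most recently bound variable).  `Γ, x:T` is represented as `T :: Γ`,
and `Γ, X` (binding a type variable) as `Γ.map (Ty.shift 0)`. -/
abbrev TyEnv := List Ty

/-- The typing judgment `Γ ⊢ e : T` of Fpl. -/
inductive HasType : TyEnv → Exp → Ty → Prop
  | var {Γ : TyEnv} {x : ℕ} {T : Ty} :
      Γ[x]? = some T → HasType Γ (.var x) T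
  | tt {Γ : TyEnv} : HasType Γ .tt .bool
  | ff {Γ : TyEnv} : HasType Γ .ff .bool
  | ite {Γ : TyEnv} {e1 e2 e3 : Exp} {T : Ty} :
      HasType Γ e1 .bool → HasType Γ e2 T → HasType Γ e3 T →
      HasType Γ (.ite e1 e2 e3) T
  | z {Γ : TyEnv} : HasType Γ .z .int
  | succ {Γ : TyEnv} {e : Exp} :
      HasType Γ e .int → HasType Γ (.succ e) .int
  | pred {Γ : TyEnv} {e : Exp} :
      HasType Γ e .int → HasType Γ (.pred e) .int
  | isZero {Γ : TyEnv} {e : Exp} :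
      HasType Γ e .int → HasType Γ (.isZero e) .bool
  | lam {Γ : TyEnv} {e : Exp} {T1 T2 : Ty} :
      HasType (T1 :: Γ) e T2 → HasType Γ (.lam e) (.arrow T1 T2)
  | app {Γ : TyEnv} {e1 e2 : Exp} {T1 T2 : Ty} :
      HasType Γ e1 (.arrow T1 T2) → HasType Γ e2 T1 →
      HasType Γ (.app e1 e2) T2
  | nil {Γ : TyEnv} {T : Ty} : HasType Γ .nil (.list T)
  | cons {Γ : TyEnv} {e1 e2 : Exp} {T : Ty} :
      HasType Γ e1 T → HasType Γ e2 (.list T) →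
      HasType Γ (.cons e1 e2) (.list T)
  | head {Γ : TyEnv} {e : Exp} {T : Ty} :
      HasType Γ e (.list T) → HasType Γ (.head e) T
  | tail {Γ : TyEnv} {e : Exp} {T : Ty} :
      HasType Γ e (.list T) → HasType Γ (.tail e) (.list T)
  | isNil {Γ : TyEnv} {e : Exp} {T : Ty} :
      HasType Γ e (.list T) → HasType Γ (.isNil e) .bool
  | inl {Γ : TyEnv} {e : Exp} {T1 T2 : Ty} :
      HasType Γ e T1 → HasType Γ (.inl e) (.sum T1 T2)
  | inr {Γ : TyEnv} {e : Exp} {T1 T2 : Ty} :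
      HasType Γ e T2 → HasType Γ (.inr e) (.sum T1 T2)
  | caseE {Γ : TyEnv} {e1 e2 e3 : Exp} {T1 T2 T : Ty} :
      HasType Γ e1 (.sum T1 T2) → HasType (T1 :: Γ) e2 T →
      HasType (T2 :: Γ) e3 T → HasType Γ (.caseE e1 e2 e3) T
  | tlam {Γ : TyEnv} {e : Exp} {T : Ty} :
      HasType (Γ.map (Ty.shift 0)) e T → HasType Γ (.tlam e) (.all T)
  | tapp {Γ : TyEnv} {e : Exp} {T1 T2 : Ty} :
      HasType Γ e (.all T2) → HasType Γ (.tapp e T1) (T2.open0 T1)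
  | fold {Γ : TyEnv} {e : Exp} {T : Ty} :
      HasType Γ e (T.open0 (.mu T)) → HasType Γ (.fold e) (.mu T)
  | unfold {Γ : TyEnv} {e : Exp} {T : Ty} :
      HasType Γ e (.mu T) → HasType Γ (.unfold e) (T.open0 (.mu T))
  | fix {Γ : TyEnv} {e : Exp} {T : Ty} :
      HasType Γ e (.arrow T T) → HasType Γ (.fix e) T
  | letrec {Γ : TyEnv} {e1 e2 : Exp} {T1 T2 : Ty} :
      HasType (T1 :: Γ) e1 T1 → HasType (T1 :: Γ) e2 T2 →
      HasType Γ (.letrec e1 e2) T2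
  | raise {Γ : TyEnv} {e : Exp} {T : Ty} :
      HasType Γ e .int → HasType Γ (.raise e) T
  | tryw {Γ : TyEnv} {e1 e2 : Exp} {T : Ty} :
      HasType Γ e1 T → HasType Γ e2 (.arrow .int T) →
      HasType Γ (.tryw e1 e2) T

/-- Call-by-value evaluation contexts `E` of Fpl (single-hole, with the hole
as base case). -/
inductive ECtx : Type
  | hole : ECtx
  | ite : ECtx → Exp → Exp → ECtx
  | succ : ECtx → ECtx
  | pred : ECtx → ECtx
  | isZero : ECtx → ECtx
  | appL : ECtx → Exp → ECtx                       -- E e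
  | appR (v : Exp) (hv : Value v) : ECtx → ECtx    -- v E
  | consL : ECtx → Exp → ECtx                      -- cons E e
  | consR (v : Exp) (hv : Value v) : ECtx → ECtx   -- cons v E
  | head : ECtx → ECtx
  | tail : ECtx → ECtx
  | isNil : ECtx → ECtx
  | inl : ECtx → ECtx
  | inr : ECtx → ECtx
  | caseE : ECtx → Exp → Exp → ECtx
  | tapp : ECtx → Ty → ECtx                        -- E [T]
  | fold : ECtx → ECtx
  | unfold : ECtx → ECtx
  | fix : ECtx → ECtx
  | letrec : ECtx → Exp → ECtx                     -- letrec x = E in e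
  | raise : ECtx → ECtx
  | tryw : ECtx → Exp → ECtx                       -- try E with e

/-- `E.plug e` plugs the expression `e` into the hole of the context `E`. -/
def ECtx.plug : ECtx → Exp → Exp
  | .hole, e => e
  | .ite E e2 e3, e => .ite (E.plug e) e2 e3
  | .succ E, e => .succ (E.plug e)
  | .pred E, e => .pred (E.plug e)
  | .isZero E, e => .isZero (E.plug e)
  | .appL E e2, e => .app (E.plug e) e2
  | .appR v _ E, e => .app v (E.plug e)
  | .consL E e2, e => .cons (E.plug e) e2
  | .consR v _ E, e => .cons v (E.plug e)
  | .head E, e => .head (E.plug e)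
  | .tail E, e => .tail (E.plug e)
  | .isNil E, e => .isNil (E.plug e)
  | .inl E, e => .inl (E.plug e)
  | .inr E, e => .inr (E.plug e)
  | .caseE E e2 e3, e => .caseE (E.plug e) e2 e3
  | .tapp E T, e => .tapp (E.plug e) T
  | .fold E, e => .fold (E.plug e)
  | .unfold E, e => .unfold (E.plug e)
  | .fix E, e => .fix (E.plug e)
  | .letrec E e2, e => .letrec (E.plug e) e2
  | .raise E, e => .raise (E.plug e)
  | .tryw E e2, e => .tryw (E.plug e) e2

/-- An error context `F` is an evaluation context that does not use the
`try E with e` case. -/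
def ECtx.IsErrCtx : ECtx → Prop
  | .hole => True
  | .ite E _ _ => E.IsErrCtx
  | .succ E => E.IsErrCtx
  | .pred E => E.IsErrCtx
  | .isZero E => E.IsErrCtx
  | .appL E _ => E.IsErrCtx
  | .appR _ _ E => E.IsErrCtx
  | .consL E _ => E.IsErrCtx
  | .consR _ _ E => E.IsErrCtx
  | .head E => E.IsErrCtx
  | .tail E => E.IsErrCtx
  | .isNil E => E.IsErrCtx
  | .inl E => E.IsErrCtx
  | .inr E => E.IsErrCtx
  | .caseE E _ _ => E.IsErrCtx
  | .tapp E _ => E.IsErrCtx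
  | .fold E => E.IsErrCtx
  | .unfold E => E.IsErrCtx
  | .fix E => E.IsErrCtx
  | .letrec E _ => E.IsErrCtx
  | .raise E => E.IsErrCtx
  | .tryw _ _ => False

/-- The one-step reduction `e → e'` of Fpl: the top-level reduction rules,
closed under evaluation contexts (rule (ctx)), together with the error
propagation rule (err-ctx) for error contexts. -/
inductive Step : Exp → Exp → Prop
  | ifTrue {e1 e2 : Exp} : Step (.ite .tt e1 e2) e1
  | ifFalse {e1 e2 : Exp} : Step (.ite .ff e1 e2) e2
  | predZ : Step (.pred .z) (.raise .z)
  | predSucc {e : Exp} : Step (.pred (.succ e)) e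
  | isZeroZ : Step (.isZero .z) .tt
  | isZeroSucc {e : Exp} : Step (.isZero (.succ e)) .ff
  | beta {e v : Exp} : Value v → Step (.app (.lam e) v) (e.open0 v)
  | headNil : Step (.head .nil) (.raise .z)
  | headCons {v1 v2 : Exp} : Value v1 → Value v2 →
      Step (.head (.cons v1 v2)) v1
  | tailNil : Step (.tail .nil) (.raise (.succ .z))
  | tailCons {v1 v2 : Exp} : Value v1 → Value v2 →
      Step (.tail (.cons v1 v2)) v2
  | isNilNil : Step (.isNil .nil) .tt
  | isNilCons {v1 v2 : Exp} : Value v1 → Value v2 →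
      Step (.isNil (.cons v1 v2)) .ff
  | caseInl {v e2 e3 : Exp} : Value v →
      Step (.caseE (.inl v) e2 e3) (e2.open0 v)
  | caseInr {v e2 e3 : Exp} : Value v →
      Step (.caseE (.inr v) e2 e3) (e3.open0 v)
  | unfoldFold {v : Exp} : Value v → Step (.unfold (.fold v)) v
  | fixV {v : Exp} : Value v → Step (.fix v) (.app v (.fix v))
  | letrecV {v e : Exp} : Value v →
      Step (.letrec v e) (e.open0 (.fix (.lam v)))
  | tryV {v e : Exp} : Value v → Step (.tryw v e) v
  | tryRaise {v e : Exp} : Value v →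
      Step (.tryw (.raise v) e) (.app e v)
  | ctx (E : ECtx) {e e' : Exp} : Step e e' → Step (E.plug e) (E.plug e')
  | errCtx (F : ECtx) {v : Exp} : F.IsErrCtx → Value v →
      Step (F.plug (.raise v)) (.raise v)

/-- `e →* e'`: the reflexive-transitive closure of one-step reduction. -/
abbrev Steps : Exp → Exp → Prop := Relation.ReflTransGen Step

end Fpl

/-!
Inverting the typing of `letrec x = v in e` gives `x : T₁ ⊢ v : T₁` and `x : T₁ ⊢ e : T`.
By (t-lambda) and (t-fix), `∅ ⊢ fix (λx.v) : T₁`, and the substitution lemma gives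
`∅ ⊢ e[fix (λx.v)/x] : T`. The substitution lemma is proved by induction on typing
derivations: under a term binder the substituted term is weakened (`Exp.shiftTm`), under a
type binder its type variables are shifted (`Exp.shiftTy`), which needs `Ty.shift` to commute
with itself and with `Ty.subst` for the cases (t-tapp), (t-fold), (t-unfold).
-/

section
variable {α : Type*} {l₁ l₂ : List α} {a : α} {x : ℕ}

theorem List.getElem?_append_cons_of_lt (h : x < l₁.length) :
    (l₁ ++ a :: l₂)[x]? = (l₁ ++ l₂)[x]? := by
  rw [List.getElem?_append_left h, List.getElem?_append_left h]

theorem List.getElem?_append_cons_succ_of_le (h : l₁.length ≤ x) :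
    (l₁ ++ a :: l₂)[x + 1]? = (l₁ ++ l₂)[x]? := by
  rw [List.getElem?_append_right (by omega), List.getElem?_append_right h,
    Nat.sub_add_comm h, List.getElem?_cons_succ]

end

namespace Fpl

theorem Ty.shift_shift (T : Ty) {c c' : ℕ} (h : c' ≤ c) :
    (T.shift c).shift c' = (T.shift c').shift (c + 1) := by
  induction T generalizing c c' with
  | var X =>
      simp only [Ty.shift]
      split_ifs <;> simp only [Ty.shift] <;> split_ifs <;> first | rfl | omega
  | all T ih => simp [Ty.shift, ih (Nat.succ_le_succ h)]
  | mu T ih => simp [Ty.shift, ih (Nat.succ_le_succ h)]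
  | _ => simp_all [Ty.shift]

theorem Ty.shift_subst (T S : Ty) {j c : ℕ} (h : j ≤ c) :
    (Ty.subst j S T).shift c = Ty.subst j (S.shift c) (T.shift (c + 1)) := by
  induction T generalizing j c S with
  | var X =>
      simp only [Ty.subst, Ty.shift]
      split_ifs <;> simp only [Ty.subst, Ty.shift] <;> split_ifs <;>
        first | rfl | omega | (congr 1; omega)
  | all T ih => simp [Ty.subst, Ty.shift, ih _ (Nat.succ_le_succ h), Ty.shift_shift S c.zero_le]
  | mu T ih => simp [Ty.subst, Ty.shift, ih _ (Nat.succ_le_succ h), Ty.shift_shift S c.zero_le]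
  | _ => simp_all [Ty.subst, Ty.shift]

theorem HasType.shiftTm {Γ : TyEnv} {e : Exp} {T : Ty} (h : HasType Γ e T)
    (Γ₁ Γ₂ : TyEnv) (U : Ty) (hΓ : Γ = Γ₁ ++ Γ₂) :
    HasType (Γ₁ ++ U :: Γ₂) (e.shiftTm Γ₁.length) T := by
  induction h generalizing Γ₁ Γ₂ U with
  | var hx =>
      subst hΓ
      simp only [Exp.shiftTm]
      split_ifs with hlt
      · exact .var (by rwa [List.getElem?_append_cons_of_lt hlt])
      · exact .var (by rwa [List.getElem?_append_cons_succ_of_le (by omega)])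
  | @lam _ _ T1 _ _ ih => exact .lam (by simpa using ih (T1 :: Γ₁) Γ₂ U (by simp [hΓ]))
  | @caseE _ _ _ _ T1 T2 _ _ _ _ ih1 ih2 ih3 =>
      exact .caseE (ih1 Γ₁ Γ₂ U hΓ) (by simpa using ih2 (T1 :: Γ₁) Γ₂ U (by simp [hΓ]))
        (by simpa using ih3 (T2 :: Γ₁) Γ₂ U (by simp [hΓ]))
  | tlam _ ih =>
      exact .tlam (by
        simpa using ih (Γ₁.map (Ty.shift 0)) (Γ₂.map (Ty.shift 0)) (U.shift 0) (by simp [hΓ]))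
  | @letrec _ _ _ T1 _ _ _ ih1 ih2 =>
      exact .letrec (by simpa using ih1 (T1 :: Γ₁) Γ₂ U (by simp [hΓ]))
        (by simpa using ih2 (T1 :: Γ₁) Γ₂ U (by simp [hΓ]))
  | _ => constructor <;> solve_by_elim

theorem HasType.shiftTy {Γ : TyEnv} {e : Exp} {T : Ty} (h : HasType Γ e T) (c : ℕ) :
    HasType (Γ.map (Ty.shift c)) (e.shiftTy c) (T.shift c) := by
  induction h generalizing c with
  | var hx => exact .var (by simp [hx])
  | @tlam Γ _ _ _ ih =>
      have hcomm : (Γ.map (Ty.shift 0)).map (Ty.shift (c + 1)) =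
          (Γ.map (Ty.shift c)).map (Ty.shift 0) := by
        simp only [List.map_map]
        exact List.map_congr_left fun T _ => (Ty.shift_shift T c.zero_le).symm
      exact .tlam (hcomm ▸ ih (c + 1))
  | @tapp _ _ T1 T2 _ ih =>
      rw [Ty.open0, Ty.shift_subst T2 T1 c.zero_le]
      exact .tapp (ih c)
  | @fold _ _ T _ ih =>
      have := ih c
      rw [Ty.open0, Ty.shift_subst T _ c.zero_le] at this
      exact .fold this
  | @unfold _ _ T _ ih =>
      rw [Ty.open0, Ty.shift_subst T _ c.zero_le]
      exact .unfold (ih c)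
  | _ => constructor <;> solve_by_elim

theorem HasType.substTm {Γ : TyEnv} {e : Exp} {T : Ty} (h : HasType Γ e T)
    (Γ₁ Γ₂ : TyEnv) (S : Ty) (s : Exp) (hΓ : Γ = Γ₁ ++ S :: Γ₂)
    (hs : HasType (Γ₁ ++ Γ₂) s S) :
    HasType (Γ₁ ++ Γ₂) (Exp.substTm Γ₁.length s e) T := by
  induction h generalizing Γ₁ Γ₂ S s with
  | @var _ x _ hx =>
      subst hΓ
      simp only [Exp.substTm]
      split_ifs with heq hlt
      · subst heq
        simp only [List.getElem?_append_right le_rfl, Nat.sub_self, List.getElem?_cons_zero,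
          Option.some.injEq] at hx
        exact hx ▸ hs
      · obtain ⟨x, rfl⟩ : ∃ x', x = x' + 1 := ⟨x - 1, by omega⟩
        exact .var (by rwa [← List.getElem?_append_cons_succ_of_le (a := S) (by omega)])
      · exact .var (by rwa [← List.getElem?_append_cons_of_lt (a := S) (by omega)])
  | @lam _ _ T1 _ _ ih =>
      rw [Exp.substTm]
      exact .lam (by simpa using ih (T1 :: Γ₁) Γ₂ S _ (by simp [hΓ]) (hs.shiftTm [] _ T1 rfl))
  | @caseE _ _ _ _ T1 T2 _ _ _ _ ih1 ih2 ih3 =>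
      rw [Exp.substTm]
      exact .caseE (ih1 Γ₁ Γ₂ S s hΓ hs)
        (by simpa using ih2 (T1 :: Γ₁) Γ₂ S _ (by simp [hΓ]) (hs.shiftTm [] _ T1 rfl))
        (by simpa using ih3 (T2 :: Γ₁) Γ₂ S _ (by simp [hΓ]) (hs.shiftTm [] _ T2 rfl))
  | tlam _ ih =>
      rw [Exp.substTm]
      have hs' := hs.shiftTy 0
      rw [List.map_append] at hs'
      exact .tlam (by simpa using ih _ _ _ _ (by simp [hΓ]) hs')
  | @letrec _ _ _ T1 _ _ _ ih1 ih2 =>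
      rw [Exp.substTm]
      exact .letrec
        (by simpa using ih1 (T1 :: Γ₁) Γ₂ S _ (by simp [hΓ]) (hs.shiftTm [] _ T1 rfl))
        (by simpa using ih2 (T1 :: Γ₁) Γ₂ S _ (by simp [hΓ]) (hs.shiftTm [] _ T1 rfl))
  | _ => rw [Exp.substTm]; constructor <;> solve_by_elim

theorem HasType.open0 {Γ : TyEnv} {e s : Exp} {S T : Ty} (he : HasType (S :: Γ) e T)
    (hs : HasType Γ s S) : HasType Γ (e.open0 s) T :=
  he.substTm [] Γ S s rfl hs

theorem fpl_preservation_letrec_general (v e : Exp) (T : Ty)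
    (h : HasType [] (.letrec v e) T) :
    HasType [] (e.open0 (.fix (.lam v))) T := by
  cases h with
  | letrec hv he => exact he.open0 (.fix (.lam hv))

/-- **Type preservation of the rule (r-letRec).**  If
`∅ ⊢ (letrec x = v in e) : T` for a value `v`, then
`∅ ⊢ e[(fix (λx.v))/x] : T`. -/
theorem fpl_preservation_letrec (v e : Exp) (T : Ty) (hv : Value v)
    (h : HasType [] (.letrec v e) T) :
    HasType [] (e.open0 (.fix (.lam v))) T :=
  fpl_preservation_letrec_general v e T h

end Fpl
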